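/- Consider the weighted projective plane ℙ(1,1,2) with coordinates (y₀:y₁:y₂). The map ψ : ℙ(1,1,2) ∖ {(y₀:0:y₂)} → Heck₅/G given by (y₀:y₁:y₂) ↦ [(y₁²z, y₀y₁ + y₂z²)] is well-defined (independent of representative) and injective, and the complement of its domain is the closed subset {y₁ = 0} ≅ ℙ(1,2). -/

import Mathlib

/-!
Scaling a representative by `λ` multiplies both jets of `ψ(y)` by the constant even unit `λ²`,
so `ψ` is well defined. For injectivity we use an invariant of `Heck₅/G`: an even unit
`φ₀ + φ₂z² + ⋯` changes the low coefficients by `b₀ ↦ φ₀b₀`, `a₁ ↦ φ₀a₁`,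
`b₂ ↦ φ₀b₂ + φ₂b₀`, `a₃ ↦ φ₀a₃ + φ₂a₁`, hence `a₁/b₀` and `(a₃b₀ - a₁b₂)/b₀²` are invariant
when `b₀ ≠ 0`, and `b₂/a₁` is invariant when `b₀ = 0 ≠ a₁`. On `ψ(y)` these are `y₁/y₀`,
`-y₂/y₀²` (case `y₀ ≠ 0`) and `y₂/y₁²` (case `y₀ = 0`), which determine `(y₀:y₁:y₂)`.
The locus `{y₁ = 0}` is saturated for the `ℂˣ`-action, hence closed in the quotient topology,
and it is the image of the injective map `ℙ(1,2) → ℙ(1,1,2)`, `(w₀:w₁) ↦ (w₀:0:w₁)`.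
-/

noncomputable section

/-- Truncated multiplication (convolution) of power-series jets. -/
def conv (φ a : ℕ → ℂ) (k : ℕ) : ℂ := ∑ i ∈ Finset.range (k + 1), φ i * a (k - i)

/-- The space `Heck_d` of Hecke parameters at a zero of odd order `d`: pairs `(a,b)` of
power-series jets with `a` odd, `b` even (under `z ↦ -z`), of vanishing order
`≤ (d-1)/2`. -/
abbrev HeckCar (d : ℕ) : Type :=
  {x : (ℕ → ℂ) × (ℕ → ℂ) //
    (∀ i, Even i → x.1 i = 0) ∧ (∀ i, ¬ Even i → x.2 i = 0) ∧
    ∃ i, i ≤ (d - 1) / 2 ∧ (x.1 i ≠ 0 ∨ x.2 i ≠ 0)}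

/-- The identification on `Heck_d`: the action of the group `G` of even truncated units
combined with the truncation relation. -/
def HeckRel (d : ℕ) (x y : HeckCar d) : Prop :=
  ∃ (n : ℕ) (φ : ℕ → ℂ), n ≤ (d - 1) / 2 ∧
    (∀ i < n, x.val.1 i = 0 ∧ x.val.2 i = 0) ∧ (x.val.1 n ≠ 0 ∨ x.val.2 n ≠ 0) ∧
    φ 0 ≠ 0 ∧ (∀ i, ¬ Even i → φ i = 0) ∧
    ∀ k < d - n, conv φ x.val.1 k = y.val.1 k ∧ conv φ x.val.2 k = y.val.2 k

/-- The weighted projective plane `ℙ(1,1,2)` as a quotient of `ℂ³ ∖ {0}` by the action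
`λ·(y₀,y₁,y₂) = (λy₀, λy₁, λ²y₂)`. -/
def W112Rel (x y : {v : Fin 3 → ℂ // v ≠ 0}) : Prop :=
  ∃ c : ℂˣ, y.val 0 = (c : ℂ) * x.val 0 ∧ y.val 1 = (c : ℂ) * x.val 1 ∧
    y.val 2 = (c : ℂ) ^ 2 * x.val 2

/-- The weighted projective line `ℙ(1,2)` as a quotient of `ℂ² ∖ {0}`. -/
def W12Rel (x y : {v : Fin 2 → ℂ // v ≠ 0}) : Prop :=
  ∃ c : ℂˣ, y.val 0 = (c : ℂ) * x.val 0 ∧ y.val 1 = (c : ℂ) ^ 2 * x.val 1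

/-- The Hecke parameter `(y₁²·z, y₀y₁ + y₂·z²) ∈ Heck₅` associated to
`(y₀ : y₁ : y₂) ∈ ℙ(1,1,2)` with `y₁ ≠ 0`. -/
def FHeck (v : Fin 3 → ℂ) (hv : v 1 ≠ 0) : HeckCar 5 :=
  ⟨((fun i => if i = 1 then (v 1) ^ 2 else 0),
    (fun i => if i = 0 then v 0 * v 1 else if i = 2 then v 2 else 0)),
    by
      refine ⟨fun i hi => ?_, fun i hi => ?_, 1, by norm_num, Or.inl ?_⟩
      · have h1 : i ≠ 1 := by rintro rfl; simp at hi
        simp [h1]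
      · have h0 : i ≠ 0 := by rintro rfl; exact hi (by decide)
        have h2 : i ≠ 2 := by rintro rfl; exact hi (by decide)
        simp [h0, h2]
      · simpa using pow_ne_zero 2 hv⟩

lemma conv_const_left (t : ℂ) (a : ℕ → ℂ) (k : ℕ) :
    conv (fun i => if i = 0 then t else 0) a k = t * a k := by
  rw [conv, Finset.sum_eq_single 0] <;> simp_all

lemma heckRel_of_eq_mul {d : ℕ} {x y : HeckCar d} {t : ℂ} (ht : t ≠ 0)
    (h₁ : ∀ k, y.val.1 k = t * x.val.1 k) (h₂ : ∀ k, y.val.2 k = t * x.val.2 k) :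
    HeckRel d x y := by
  obtain ⟨i, hi, hix⟩ := x.prop.2.2
  have hex : ∃ i, x.val.1 i ≠ 0 ∨ x.val.2 i ≠ 0 := ⟨i, hix⟩
  refine ⟨Nat.find hex, fun i => if i = 0 then t else 0, (Nat.find_min' hex hix).trans hi,
    fun j hj => ?_, Nat.find_spec hex, by simpa using ht, fun j hj => ?_, fun k _ => ?_⟩
  · simpa [not_or] using Nat.find_min hex hj
  · simp [show j ≠ 0 by rintro rfl; exact hj Even.zero]
  · simp only [conv_const_left, h₁, h₂, and_self]

lemma FHeck_eq_mul {v u : Fin 3 → ℂ} (hv₁ : v 1 ≠ 0) (hu₁ : u 1 ≠ 0) {c : ℂ}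
    (h₀ : u 0 = c * v 0) (h₁ : u 1 = c * v 1) (h₂ : u 2 = c ^ 2 * v 2) :
    (∀ k, (FHeck u hu₁).val.1 k = c ^ 2 * (FHeck v hv₁).val.1 k) ∧
      ∀ k, (FHeck u hu₁).val.2 k = c ^ 2 * (FHeck v hv₁).val.2 k := by
  constructor <;> intro k <;> simp only [FHeck] <;> split_ifs <;> simp [h₀, h₁, h₂] <;> ring

lemma HeckRel.coeff_eq {x y : HeckCar 5} (h : HeckRel 5 x y) :
    ∃ φ₀ φ₂ : ℂ, φ₀ ≠ 0 ∧ y.val.2 0 = φ₀ * x.val.2 0 ∧ y.val.1 1 = φ₀ * x.val.1 1 ∧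
      y.val.2 2 = φ₀ * x.val.2 2 + φ₂ * x.val.2 0 ∧
      (x.val.2 0 ≠ 0 → y.val.1 3 = φ₀ * x.val.1 3 + φ₂ * x.val.1 1) := by
  obtain ⟨n, φ, hn, hlow, -, hφ₀, hφodd, hk⟩ := h
  have hφ₁ : φ 1 = 0 := hφodd 1 (by decide)
  have hφ₃ : φ 3 = 0 := hφodd 3 (by decide)
  have ha₀ : x.val.1 0 = 0 := x.prop.1 0 Even.zero
  have ha₂ : x.val.1 2 = 0 := x.prop.1 2 (by decide)
  have hb₁ : x.val.2 1 = 0 := x.prop.2.1 1 (by decide)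
  refine ⟨φ 0, φ 2, hφ₀, ?_, ?_, ?_, fun hb₀ => ?_⟩
  · simp [← (hk 0 (by omega)).2, conv]
  · simp [← (hk 1 (by omega)).1, conv, Finset.sum_range_succ, hφ₁]
  · simp [← (hk 2 (by omega)).2, conv, Finset.sum_range_succ, hφ₁, hb₁]
  · have hn₀ : n = 0 := by
      by_contra hne
      exact hb₀ (hlow 0 (by omega)).2
    simp [← (hk 3 (by omega)).1, conv, Finset.sum_range_succ, hφ₁, hφ₃, ha₀, ha₂]

/-- The leading entry tags which of the three cases `b₀ ≠ 0`, `b₀ = 0 ≠ a₁`, `b₀ = a₁ = 0`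
occurs. -/
def heckInv (x : HeckCar 5) : ℕ × ℂ × ℂ :=
  if x.val.2 0 ≠ 0 then
    (0, x.val.1 1 / x.val.2 0,
      (x.val.1 3 * x.val.2 0 - x.val.1 1 * x.val.2 2) / x.val.2 0 ^ 2)
  else if x.val.1 1 ≠ 0 then (1, x.val.2 2 / x.val.1 1, 0)
  else (2, 0, 0)

lemma heckInv_eq_of_heckRel {x y : HeckCar 5} (h : HeckRel 5 x y) : heckInv x = heckInv y := by
  obtain ⟨φ₀, φ₂, hφ₀, e₀, e₁, e₂, e₃⟩ := h.coeff_eq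
  unfold heckInv
  by_cases hb₀ : x.val.2 0 = 0
  · by_cases ha₁ : x.val.1 1 = 0
    · simp [e₀, e₁, hb₀, ha₁]
    · simp [e₀, e₁, e₂, hb₀, ha₁, hφ₀, mul_div_mul_left]
  · simp only [e₀, e₁, e₂, e₃ hb₀, ne_eq, mul_eq_zero, hφ₀, hb₀, or_self, not_false_eq_true,
      if_true, Prod.mk.injEq, true_and]
    constructor
    · exact (mul_div_mul_left _ _ hφ₀).symm
    · field_simp
      ring

lemma heckInv_eq_of_quot_mk_eq {x y : HeckCar 5}
    (h : Quot.mk (HeckRel 5) x = Quot.mk (HeckRel 5) y) : heckInv x = heckInv y :=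
  congrArg (Quot.lift heckInv fun _ _ => heckInv_eq_of_heckRel) h

lemma heckInv_FHeck_of_ne_zero {v : Fin 3 → ℂ} (hv₁ : v 1 ≠ 0) (hv₀ : v 0 ≠ 0) :
    heckInv (FHeck v hv₁) = (0, v 1 / v 0, -(v 2 / v 0 ^ 2)) := by
  simp [heckInv, FHeck, hv₀, hv₁]
  constructor <;> field_simp

lemma heckInv_FHeck_of_eq_zero {v : Fin 3 → ℂ} (hv₁ : v 1 ≠ 0) (hv₀ : v 0 = 0) :
    heckInv (FHeck v hv₁) = (1, v 2 / v 1 ^ 2, 0) := by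
  simp [heckInv, FHeck, hv₀, hv₁]

lemma w112Rel_of_heckInv_FHeck_eq {v u : Fin 3 → ℂ} (hv : v ≠ 0) (hu : u ≠ 0)
    (hv₁ : v 1 ≠ 0) (hu₁ : u 1 ≠ 0) (h : heckInv (FHeck v hv₁) = heckInv (FHeck u hu₁)) :
    W112Rel ⟨v, hv⟩ ⟨u, hu⟩ := by
  by_cases hv₀ : v 0 = 0 <;> by_cases hu₀ : u 0 = 0
  · rw [heckInv_FHeck_of_eq_zero hv₁ hv₀, heckInv_FHeck_of_eq_zero hu₁ hu₀] at h
    simp only [Prod.mk.injEq, true_and, and_true] at h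
    refine ⟨Units.mk0 (u 1 / v 1) (div_ne_zero hu₁ hv₁), ?_, ?_, ?_⟩ <;> simp only [Units.val_mk0]
    · simp [hv₀, hu₀]
    · field_simp
    · field_simp at h ⊢
      linear_combination -h
  · simp [heckInv_FHeck_of_eq_zero hv₁ hv₀, heckInv_FHeck_of_ne_zero hu₁ hu₀] at h
  · simp [heckInv_FHeck_of_ne_zero hv₁ hv₀, heckInv_FHeck_of_eq_zero hu₁ hu₀] at h
  · rw [heckInv_FHeck_of_ne_zero hv₁ hv₀, heckInv_FHeck_of_ne_zero hu₁ hu₀] at h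
    simp only [Prod.mk.injEq, true_and, neg_inj] at h
    obtain ⟨h₁, h₂⟩ := h
    refine ⟨Units.mk0 (u 0 / v 0) (div_ne_zero hu₀ hv₀), ?_, ?_, ?_⟩ <;> simp only [Units.val_mk0]
    · field_simp
    · field_simp at h₁ ⊢
      linear_combination -h₁
    · field_simp at h₂ ⊢
      linear_combination -h₂

lemma w112Rel_equivalence : Equivalence W112Rel where
  refl _ := ⟨1, by simp⟩
  symm := by
    rintro x y ⟨c, h₀, h₁, h₂⟩
    refine ⟨c⁻¹, ?_, ?_, ?_⟩ <;> simp [h₀, h₁, h₂]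
  trans := by
    rintro x y z ⟨c, h₀, h₁, h₂⟩ ⟨d, g₀, g₁, g₂⟩
    refine ⟨d * c, ?_, ?_, ?_⟩ <;> simp only [g₀, g₁, g₂, h₀, h₁, h₂, Units.val_mul] <;> ring

lemma W112Rel.of_quot_mk_eq {x y : {v : Fin 3 → ℂ // v ≠ 0}}
    (h : Quot.mk W112Rel x = Quot.mk W112Rel y) : W112Rel x y :=
  w112Rel_equivalence.eqvGen_iff.mp (Quot.eqvGen_exact h)

def y₁ZeroLocus : Set (Quot W112Rel) :=
  {q | ∃ x : {v : Fin 3 → ℂ // v ≠ 0}, Quot.mk W112Rel x = q ∧ x.val 1 = 0}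

lemma preimage_y₁ZeroLocus :
    Quot.mk W112Rel ⁻¹' y₁ZeroLocus = {x : {v : Fin 3 → ℂ // v ≠ 0} | x.val 1 = 0} := by
  ext x
  refine ⟨fun ⟨y, hy, hy₁⟩ => ?_, fun hx => ⟨x, rfl, hx⟩⟩
  obtain ⟨c, -, h₁, -⟩ := W112Rel.of_quot_mk_eq hy
  simp [h₁, hy₁]

lemma isClosed_y₁ZeroLocus : IsClosed y₁ZeroLocus := by
  rw [← isQuotientMap_quot_mk.isClosed_preimage, preimage_y₁ZeroLocus]
  exact isClosed_eq ((continuous_apply 1).comp continuous_subtype_val) continuous_const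

def embedY₁Zero (w : {v : Fin 2 → ℂ // v ≠ 0}) : {v : Fin 3 → ℂ // v ≠ 0} :=
  ⟨![w.val 0, 0, w.val 1], fun h => w.prop <| by
    ext i
    fin_cases i
    exacts [congrFun h 0, congrFun h 2]⟩

def w12ToW112 : Quot W12Rel → Quot W112Rel :=
  Quot.map embedY₁Zero fun _ _ ⟨c, h₀, h₁⟩ => ⟨c, h₀, (mul_zero _).symm, h₁⟩

lemma w12ToW112_injective : Function.Injective w12ToW112 := by
  rintro ⟨a⟩ ⟨b⟩ h
  obtain ⟨c, h₀, -, h₂⟩ := W112Rel.of_quot_mk_eq h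
  exact Quot.sound ⟨c, h₀, h₂⟩

lemma range_w12ToW112 : Set.range w12ToW112 = y₁ZeroLocus := by
  ext q
  constructor
  · rintro ⟨⟨w⟩, rfl⟩
    exact ⟨embedY₁Zero w, rfl, rfl⟩
  · rintro ⟨x, rfl, hx₁⟩
    have hw : ![x.val 0, x.val 2] ≠ 0 := fun h => x.prop <| by
      ext i
      fin_cases i
      exacts [congrFun h 0, hx₁, congrFun h 1]
    refine ⟨Quot.mk _ ⟨_, hw⟩, congrArg (Quot.mk _) (Subtype.ext ?_)⟩
    ext i
    fin_cases i <;> simp [embedY₁Zero, hx₁]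

/-- The map `ψ : ℙ(1,1,2) ∖ {(y₀:0:y₂)} → Heck₅/G`,
`(y₀:y₁:y₂) ↦ [(y₁²z, y₀y₁ + y₂z²)]`, is well-defined (independent of the chosen
representative) and injective, and the complement of its domain is the closed subset
`{y₁ = 0}`, which is isomorphic to `ℙ(1,2)`. -/
theorem stmt14 :
    (∀ (v u : Fin 3 → ℂ) (hv : v ≠ 0) (hv1 : v 1 ≠ 0) (hu : u ≠ 0) (hu1 : u 1 ≠ 0),
      W112Rel ⟨v, hv⟩ ⟨u, hu⟩ →
        Quot.mk (HeckRel 5) (FHeck v hv1) = Quot.mk (HeckRel 5) (FHeck u hu1)) ∧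
    (∀ (v u : Fin 3 → ℂ) (hv : v ≠ 0) (hv1 : v 1 ≠ 0) (hu : u ≠ 0) (hu1 : u 1 ≠ 0),
      Quot.mk (HeckRel 5) (FHeck v hv1) = Quot.mk (HeckRel 5) (FHeck u hu1) →
        Quot.mk W112Rel ⟨v, hv⟩ = Quot.mk W112Rel ⟨u, hu⟩) ∧
    IsClosed {q : Quot W112Rel | ∃ x : {v : Fin 3 → ℂ // v ≠ 0},
      Quot.mk W112Rel x = q ∧ x.val 1 = 0} ∧
    Nonempty ({q : Quot W112Rel | ∃ x : {v : Fin 3 → ℂ // v ≠ 0},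
      Quot.mk W112Rel x = q ∧ x.val 1 = 0} ≃ Quot W12Rel) := by
  refine ⟨?_, ?_, isClosed_y₁ZeroLocus,
    ⟨((Equiv.ofInjective _ w12ToW112_injective).trans (Equiv.setCongr range_w12ToW112)).symm⟩⟩
  · rintro v u hv hv1 hu hu1 ⟨c, h₀, h₁, h₂⟩
    obtain ⟨ha, hb⟩ := FHeck_eq_mul hv1 hu1 h₀ h₁ h₂
    exact Quot.sound (heckRel_of_eq_mul (pow_ne_zero 2 c.ne_zero) ha hb)
  · intro v u hv hv1 hu hu1 h
    exact Quot.sound (w112Rel_of_heckInv_FHeck_eq hv hu hv1 hu1 (heckInv_eq_of_quot_mk_eq h))
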